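/- arXiv:cs/9904002 — 2 statements merged into one kernel-verified Lean document; each statement's English description precedes it below -/
import Mathlib

section
/- Let c_1,…,c_n be vectors in a real inner product space and let λ_1,…,λ_n be real numbers with Σ_i λ_i = 0. Then Σ_{i,j} λ_i λ_j ‖c_i − c_j‖ ≤ 0. In other words, the Euclidean distance is a kernel of negative type. -/
/-!
The Gaussian kernel `exp (-s ‖x - y‖²)` is positive semidefinite for every `s ≥ 0`: up to the
diagonal factors `exp (-s ‖x‖²)` it is `exp (2s ⟪x, y⟫)`, a power series with nonnegative
coefficients in the Gram kernel, and Hadamard powers of a positive semidefinite matrix are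
positive semidefinite (Schur). Hence `1 - exp (-s ‖x - y‖²)` is of negative type, and so is
`‖x - y‖`, because `r ∫₀^∞ (1 - exp (-t²)) / t² dt = ∫₀^∞ (1 - exp (-t² r²)) / t² dt` for `r ≥ 0`.
-/

open MeasureTheory Set Matrix
open scoped RealInnerProductSpace

theorem Matrix.PosSemidef.of_hasSum {ι : Type*} [Fintype ι] {M : ℕ → Matrix ι ι ℝ}
    {A : Matrix ι ι ℝ} (hM : ∀ k, (M k).PosSemidef) (hA : ∀ i j, HasSum (fun k ↦ M k i j) (A i j)) :
    A.PosSemidef := by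
  refine .of_dotProduct_mulVec_nonneg ?_ fun x ↦ ?_
  · ext i j
    have hsymm (k : ℕ) : M k i j = M k j i := by simpa using ((hM k).1.apply i j).symm
    exact (hA j i).unique <| by simpa only [hsymm] using hA i j
  · have hsum : HasSum (fun k ↦ star x ⬝ᵥ (M k *ᵥ x)) (star x ⬝ᵥ (A *ᵥ x)) := by
      simp only [dotProduct, mulVec]
      exact hasSum_sum fun i _ ↦ (hasSum_sum fun j _ ↦ (hA i j).mul_right (x j)).mul_left _
    exact hsum.nonneg fun k ↦ (hM k).dotProduct_mulVec_nonneg x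

section Kernels

variable {ι E : Type*} [Fintype ι] [NormedAddCommGroup E] [InnerProductSpace ℝ E]

theorem posSemidef_inner_pow (c : ι → E) (k : ℕ) :
    (of fun i j ↦ ⟪c i, c j⟫ ^ k).PosSemidef := by
  induction k with
  | zero => simpa [vecMulVec] using posSemidef_vecMulVec_self_star (1 : ι → ℝ)
  | succ k ih =>
    have hprod : (of fun i j ↦ ⟪c i, c j⟫ ^ (k + 1))
        = (of fun i j ↦ ⟪c i, c j⟫ ^ k) ⊙ gram ℝ c := by
      ext i j
      simp [pow_succ, gram]
    exact hprod ▸ ih.hadamard (posSemidef_gram ℝ c)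

theorem posSemidef_exp_inner (c : ι → E) {s : ℝ} (hs : 0 ≤ s) :
    (of fun i j ↦ Real.exp (s * ⟪c i, c j⟫)).PosSemidef :=
  PosSemidef.of_hasSum (fun k ↦ (posSemidef_inner_pow c k).smul (a := s ^ k / k.factorial)
    (by positivity)) fun i j ↦ by
      simpa [Real.exp_eq_exp_ℝ, mul_pow, div_mul_eq_mul_div] using
        NormedSpace.expSeries_div_hasSum_exp (s * ⟪c i, c j⟫)

theorem posSemidef_exp_neg_norm_sub_sq (c : ι → E) {s : ℝ} (hs : 0 ≤ s) :
    (of fun i j ↦ Real.exp (-(s * ‖c i - c j‖ ^ 2))).PosSemidef := by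
  classical
  set D := diagonal fun i ↦ Real.exp (-(s * ‖c i‖ ^ 2))
  convert (posSemidef_exp_inner c (mul_nonneg zero_le_two hs)).mul_mul_conjTranspose_same D
    using 1
  ext i j
  simp only [D, diagonal_conjTranspose, diagonal_mul, mul_diagonal, of_apply, star_trivial]
  rw [← Real.exp_add, ← Real.exp_add, norm_sub_sq_real]
  ring_nf

theorem sum_mul_mul_one_sub_exp_neg_norm_sub_sq_nonpos (c : ι → E) {lam : ι → ℝ}
    (hlam : ∑ i, lam i = 0) {s : ℝ} (hs : 0 ≤ s) :
    ∑ i, ∑ j, lam i * lam j * (1 - Real.exp (-(s * ‖c i - c j‖ ^ 2))) ≤ 0 := by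
  have hquad : 0 ≤ ∑ i, ∑ j, lam i * lam j * Real.exp (-(s * ‖c i - c j‖ ^ 2)) := by
    refine ((posSemidef_exp_neg_norm_sub_sq c hs).dotProduct_mulVec_nonneg lam).trans_eq ?_
    simp only [dotProduct, mulVec, of_apply, star_trivial, Finset.mul_sum]
    exact Finset.sum_congr rfl fun i _ ↦ Finset.sum_congr rfl fun j _ ↦ by ring
  have hmass : ∑ i, ∑ j, lam i * lam j = 0 := by rw [← Finset.sum_mul_sum, hlam, zero_mul]
  simp only [mul_sub, mul_one, Finset.sum_sub_distrib, hmass]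
  linarith

end Kernels

noncomputable def oneSubGaussianDivSq (r t : ℝ) : ℝ := (1 - Real.exp (-(t ^ 2 * r ^ 2))) / t ^ 2

namespace oneSubGaussianDivSq

theorem nonneg (r t : ℝ) : 0 ≤ oneSubGaussianDivSq r t :=
  div_nonneg (sub_nonneg.2 <| Real.exp_le_one_iff.2 <| neg_nonpos.2 <| by positivity) (sq_nonneg t)

theorem le_sq (r t : ℝ) : oneSubGaussianDivSq r t ≤ r ^ 2 := by
  rcases eq_or_ne t 0 with rfl | ht
  · simp [oneSubGaussianDivSq]; positivity
  rw [oneSubGaussianDivSq, div_le_iff₀ (by positivity)]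
  linarith [Real.add_one_le_exp (-(t ^ 2 * r ^ 2))]

theorem le_inv_sq (r t : ℝ) : oneSubGaussianDivSq r t ≤ (t ^ 2)⁻¹ := by
  rw [oneSubGaussianDivSq, div_eq_mul_inv]
  exact mul_le_of_le_one_left (by positivity) (by linarith [Real.exp_pos (-(t ^ 2 * r ^ 2))])

theorem measurable (r : ℝ) : Measurable (oneSubGaussianDivSq r) := by
  unfold oneSubGaussianDivSq; fun_prop

theorem integrableOn_Ioi (r : ℝ) : IntegrableOn (oneSubGaussianDivSq r) (Ioi 0) := by
  have hmeas : AEStronglyMeasurable (oneSubGaussianDivSq r) :=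
    (measurable r).aestronglyMeasurable
  have hnorm (t : ℝ) : ‖oneSubGaussianDivSq r t‖ = oneSubGaussianDivSq r t :=
    Real.norm_of_nonneg (nonneg r t)
  have hnear : IntegrableOn (oneSubGaussianDivSq r) (Ioc 0 1) :=
    Integrable.mono' (integrableOn_const (by simp)) hmeas.restrict <|
      Filter.Eventually.of_forall fun t ↦ (hnorm t).trans_le (le_sq r t)
  have hfar : IntegrableOn (oneSubGaussianDivSq r) (Ioi 1) := by
    refine Integrable.mono' (integrableOn_Ioi_rpow_of_lt (by norm_num : (-2 : ℝ) < -1) one_pos)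
      hmeas.restrict <| (ae_restrict_iff' measurableSet_Ioi).2 <| .of_forall fun t ht ↦ ?_
    rw [hnorm, Real.rpow_neg (zero_le_one.trans (le_of_lt ht))]
    exact_mod_cast le_inv_sq r t
  simpa [Ioc_union_Ioi_eq_Ioi zero_le_one] using hnear.union hfar

theorem integral_Ioi {r : ℝ} (hr : 0 ≤ r) :
    ∫ t in Ioi 0, oneSubGaussianDivSq r t = r * ∫ t in Ioi 0, oneSubGaussianDivSq 1 t := by
  rcases hr.eq_or_lt with rfl | hr
  · simp [oneSubGaussianDivSq]
  have hscale : EqOn (oneSubGaussianDivSq r) (fun t ↦ r ^ 2 * oneSubGaussianDivSq 1 (r * t))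
      (Ioi 0) := fun t ht ↦ by
    have ht0 : t ≠ 0 := ne_of_gt ht
    simp only [oneSubGaussianDivSq]
    field_simp
  rw [setIntegral_congr_fun measurableSet_Ioi hscale, integral_const_mul,
    integral_comp_mul_left_Ioi _ 0 hr, mul_zero, smul_eq_mul]
  field_simp

theorem integral_Ioi_one_pos : 0 < ∫ t in Ioi 0, oneSubGaussianDivSq 1 t := by
  rw [setIntegral_pos_iff_support_of_nonneg_ae
    ((ae_restrict_iff' measurableSet_Ioi).2 <| .of_forall fun t _ ↦ nonneg 1 t)
    (integrableOn_Ioi 1)]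
  have hsupp : Ioi 0 ⊆ Function.support (oneSubGaussianDivSq 1) ∩ Ioi 0 := fun t ht ↦ by
    refine ⟨(div_pos ?_ (pow_pos ht 2)).ne', ht⟩
    simpa using Real.exp_lt_one_iff.2 (by nlinarith [ht.out] : -(t ^ 2 * 1 ^ 2) < 0)
  exact (measure_mono hsupp).trans_lt' (by simp)

end oneSubGaussianDivSq

theorem sum_mul_mul_oneSubGaussianDivSq_nonpos {ι E : Type*} [Fintype ι] [NormedAddCommGroup E]
    [InnerProductSpace ℝ E] (c : ι → E) {lam : ι → ℝ} (hlam : ∑ i, lam i = 0) (t : ℝ) :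
    ∑ i, ∑ j, lam i * lam j * oneSubGaussianDivSq ‖c i - c j‖ t ≤ 0 := by
  calc ∑ i, ∑ j, lam i * lam j * oneSubGaussianDivSq ‖c i - c j‖ t
      = (∑ i, ∑ j, lam i * lam j * (1 - Real.exp (-(t ^ 2 * ‖c i - c j‖ ^ 2)))) / t ^ 2 := by
        simp only [oneSubGaussianDivSq, Finset.sum_div, mul_div_assoc]
    _ ≤ 0 := div_nonpos_of_nonpos_of_nonneg
        (sum_mul_mul_one_sub_exp_neg_norm_sub_sq_nonpos c hlam (sq_nonneg t)) (sq_nonneg t)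

/-- The Euclidean distance is a kernel of negative type: for vectors `c_1,…,c_n` in a
real inner product space and reals `λ_1,…,λ_n` with `Σ_i λ_i = 0`, one has
`Σ_{i,j} λ_i λ_j ‖c_i − c_j‖ ≤ 0`. -/
theorem stmt8 {E : Type*} [NormedAddCommGroup E] [InnerProductSpace ℝ E]
    {n : ℕ} (c : Fin n → E) (lam : Fin n → ℝ) (hlam : ∑ i, lam i = 0) :
    ∑ i, ∑ j, lam i * lam j * ‖c i - c j‖ ≤ 0 := by
  set C := ∫ t in Ioi 0, oneSubGaussianDivSq 1 t
  have hint (i j : Fin n) : IntegrableOn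
      (fun t ↦ lam i * lam j * oneSubGaussianDivSq ‖c i - c j‖ t) (Ioi 0) :=
    (oneSubGaussianDivSq.integrableOn_Ioi _).const_mul _
  have hrepr : (∑ i, ∑ j, lam i * lam j * ‖c i - c j‖) * C
      = ∫ t in Ioi 0, ∑ i, ∑ j, lam i * lam j * oneSubGaussianDivSq ‖c i - c j‖ t := by
    rw [integral_finsetSum _ fun i _ ↦ integrable_finsetSum _ fun j _ ↦ hint i j, Finset.sum_mul]
    refine Finset.sum_congr rfl fun i _ ↦ ?_
    rw [integral_finsetSum _ fun j _ ↦ hint i j, Finset.sum_mul]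
    refine Finset.sum_congr rfl fun j _ ↦ ?_
    rw [integral_const_mul, oneSubGaussianDivSq.integral_Ioi (norm_nonneg _), mul_assoc]
  have hneg : (∑ i, ∑ j, lam i * lam j * ‖c i - c j‖) * C ≤ 0 :=
    hrepr ▸ setIntegral_nonpos measurableSet_Ioi fun t _ ↦
      sum_mul_mul_oneSubGaussianDivSq_nonpos c hlam t
  exact nonpos_of_mul_nonpos_left hneg oneSubGaussianDivSq.integral_Ioi_one_pos
end

section
/- Let c_1,…,c_n be points of a real Hilbert space H. Then there exist vectors v_1,…,v_n in some real Hilbert space (one may take ℝⁿ) such that ‖v_i − v_j‖² = ‖c_i − c_j‖ for all i, j. That is, the metric transform of a finite subset of Euclidean (Hilbert) space by the function F(t) = √t embeds isometrically into a Hilbert space. -/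
/-!
By Schoenberg's criterion, a symmetric kernel `d` with zero diagonal is a squared Euclidean
distance as soon as it is of negative type, since then its Gromov product matrix at any base
point is positive semidefinite, hence a Gram matrix. The Euclidean distance is of negative type:
averaging over the standard Gaussian measure, `‖z‖` is a constant multiple of `𝔼 |⟪z, g⟫|`,
which reduces the claim to the line, where `|s - t| = ∫ (𝟙_{r ≤ s} - 𝟙_{r ≤ t})² dr` is a squared
distance in `L²`.
-/

open MeasureTheory ProbabilityTheory Finset Matrix
open scoped RealInnerProductSpace MatrixOrder

def NegativeType {ι : Type*} [Fintype ι] (d : ι → ι → ℝ) : Prop :=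
  ∀ x : ι → ℝ, ∑ i, x i = 0 → ∑ i, ∑ j, x i * x j * d i j ≤ 0

section NegativeType

variable {ι : Type*} [Fintype ι]

theorem negativeType_sub_sq (s : ι → ℝ) : NegativeType fun i j => (s i - s j) ^ 2 := by
  intro x hx
  have h : ∀ i j, x i * x j * (s i - s j) ^ 2
      = x i * s i ^ 2 * x j + x i * (x j * s j ^ 2) - 2 * (x i * s i) * (x j * s j) := by
    intro i j; ring
  have hsum : ∑ i, ∑ j, x i * x j * (s i - s j) ^ 2 = -2 * (∑ i, x i * s i) ^ 2 := by
    simp only [h, sum_sub_distrib, sum_add_distrib, ← mul_sum, ← sum_mul, hx]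
    ring
  rw [hsum]
  nlinarith [sq_nonneg (∑ i, x i * s i)]

theorem NegativeType.integral {α : Type*} [MeasurableSpace α] {μ : Measure α}
    {f : ι → ι → α → ℝ} (hf : ∀ i j, Integrable (f i j) μ)
    (h : ∀ r, NegativeType fun i j => f i j r) :
    NegativeType fun i j => ∫ r, f i j r ∂μ := by
  intro x hx
  calc ∑ i, ∑ j, x i * x j * ∫ r, f i j r ∂μ
      = ∫ r, ∑ i, ∑ j, x i * x j * f i j r ∂μ := by
        rw [integral_finsetSum _ fun i _ => integrable_finsetSum _ fun j _ =>
          (hf i j).const_mul _]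
        refine sum_congr rfl fun i _ => ?_
        rw [integral_finsetSum _ fun j _ => (hf i j).const_mul _]
        simp only [integral_const_mul]
    _ ≤ 0 := integral_nonpos fun r => h r x hx

theorem NegativeType.of_const_mul {d : ι → ι → ℝ} {K : ℝ} (hK : 0 < K)
    (h : NegativeType fun i j => K * d i j) : NegativeType d := by
  intro x hx
  have hK_mul := h x hx
  simp only [mul_left_comm _ K, ← mul_sum] at hK_mul
  exact nonpos_of_mul_nonpos_right hK_mul hK

end NegativeType

theorem sq_indicator_Iic_sub (p q r : ℝ) :
    ((Set.Iic p).indicator 1 r - (Set.Iic q).indicator 1 r : ℝ) ^ 2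
      = (Set.Ioc (min p q) (max p q)).indicator 1 r := by
  simp only [Set.indicator_apply, Set.mem_Iic, Set.mem_Ioc, min_lt_iff, le_max_iff, Pi.one_apply]
  split_ifs <;> grind

theorem integrable_sq_indicator_Iic_sub (p q : ℝ) :
    Integrable fun r => ((Set.Iic p).indicator 1 r - (Set.Iic q).indicator 1 r : ℝ) ^ 2 := by
  simp only [sq_indicator_Iic_sub]
  exact (integrable_indicator_iff measurableSet_Ioc).2 (integrableOn_const measure_Ioc_lt_top.ne)

theorem integral_sq_indicator_Iic_sub (p q : ℝ) :
    ∫ r, ((Set.Iic p).indicator 1 r - (Set.Iic q).indicator 1 r : ℝ) ^ 2 = |p - q| := by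
  simp [sq_indicator_Iic_sub, integral_indicator_one measurableSet_Ioc, max_sub_min_eq_abs,
    abs_sub_comm]

theorem negativeType_abs_sub {ι : Type*} [Fintype ι] (s : ι → ℝ) :
    NegativeType fun i j => |s i - s j| := by
  have h := NegativeType.integral (μ := volume)
    (fun i j => integrable_sq_indicator_Iic_sub (s i) (s j))
    (fun r => negativeType_sub_sq fun i => (Set.Iic (s i)).indicator 1 r)
  simpa only [integral_sq_indicator_Iic_sub] using h

theorem integral_abs_gaussianReal_pos : 0 < ∫ t, |t| ∂gaussianReal 0 1 := by
  have := nullSingletonClass_gaussianReal (μ := 0) one_ne_zero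
  rw [integral_pos_iff_support_of_nonneg (fun t => abs_nonneg t)
    (IsGaussian.integrable_dual _ (ContinuousLinearMap.id ℝ ℝ)).abs]
  have hsupp : (Function.support fun t : ℝ => |t|) = {0}ᶜ := by ext; simp
  simp [hsupp, measure_compl]

section FiniteDimensional

variable {E : Type*} [NormedAddCommGroup E] [InnerProductSpace ℝ E] [FiniteDimensional ℝ E]
  [MeasurableSpace E] [BorelSpace E]

theorem integral_abs_inner_stdGaussian (z : E) :
    ∫ u, |⟪z, u⟫| ∂stdGaussian E = (∫ t, |t| ∂gaussianReal 0 1) * ‖z‖ := by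
  have hmap : (stdGaussian E).map (innerSL ℝ z) = (gaussianReal 0 1).map (‖z‖ * ·) := by
    rw [IsGaussian.map_eq_gaussianReal, integral_strongDual_stdGaussian,
      variance_dual_stdGaussian, innerSL_apply_norm, gaussianReal_map_const_mul]
    congr 1
    · simp
    · ext; simp
  calc ∫ u, |⟪z, u⟫| ∂stdGaussian E = ∫ t, |t| ∂(stdGaussian E).map (innerSL ℝ z) := by
        rw [integral_map (by fun_prop) (by fun_prop)]; rfl
    _ = ∫ t, |‖z‖ * t| ∂gaussianReal 0 1 := by
        rw [hmap, integral_map (by fun_prop) (by fun_prop)]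
    _ = (∫ t, |t| ∂gaussianReal 0 1) * ‖z‖ := by
        rw [← integral_mul_const]
        simp only [abs_mul, abs_norm, mul_comm]

theorem negativeType_norm_sub_of_finiteDimensional {ι : Type*} [Fintype ι] (a : ι → E) :
    NegativeType fun i j => ‖a i - a j‖ := by
  refine NegativeType.of_const_mul integral_abs_gaussianReal_pos ?_
  have h := NegativeType.integral (μ := stdGaussian E)
    (fun i j => (IsGaussian.integrable_dual _ (innerSL ℝ (a i - a j))).abs)
    (fun u => by simpa only [innerSL_apply_apply, inner_sub_left] using
      negativeType_abs_sub fun i => ⟪a i, u⟫)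
  simpa only [innerSL_apply_apply, integral_abs_inner_stdGaussian] using h

end FiniteDimensional

theorem negativeType_norm_sub {E : Type*} [NormedAddCommGroup E] [InnerProductSpace ℝ E]
    {ι : Type*} [Fintype ι] (a : ι → E) : NegativeType fun i j => ‖a i - a j‖ := by
  let S := Submodule.span ℝ (Set.range a)
  have : FiniteDimensional ℝ S := FiniteDimensional.span_of_finite ℝ (Set.finite_range a)
  let : MeasurableSpace S := borel S
  have : BorelSpace S := ⟨rfl⟩
  simpa using negativeType_norm_sub_of_finiteDimensional
    fun i => (⟨a i, Submodule.subset_span ⟨i, rfl⟩⟩ : S)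

theorem exists_gram_eq_of_posSemidef {ι : Type*} [Fintype ι] {M : Matrix ι ι ℝ}
    (hM : M.PosSemidef) : ∃ v : ι → EuclideanSpace ℝ ι, gram ℝ v = M := by
  classical
  obtain ⟨B, rfl⟩ := CStarAlgebra.nonneg_iff_eq_star_mul_self.mp hM.nonneg
  refine ⟨fun i => WithLp.toLp 2 fun k => B k i, ?_⟩
  ext i j
  simp [gram_apply, Matrix.mul_apply, PiLp.inner_apply, mul_comm]

section Schoenberg

variable {ι : Type*} [Fintype ι] {d : ι → ι → ℝ}

noncomputable def gromovProductMatrix (d : ι → ι → ℝ) (i₀ : ι) : Matrix ι ι ℝ :=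
  Matrix.of fun i j => (d i i₀ + d j i₀ - d i j) / 2

theorem dotProduct_gromovProductMatrix_mulVec [DecidableEq ι] (hsymm : ∀ i j, d i j = d j i)
    (hdiag : ∀ i, d i i = 0) (i₀ : ι) (x : ι → ℝ) :
    x ⬝ᵥ gromovProductMatrix d i₀ *ᵥ x
      = -(∑ i, ∑ j, (x - (∑ k, x k) • Pi.single i₀ 1 : ι → ℝ) i
          * (x - (∑ k, x k) • Pi.single i₀ 1 : ι → ℝ) j * d i j) / 2 := by
  set s := ∑ k, x k
  set δ : ι → ℝ := Pi.single i₀ 1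
  have hquad : x ⬝ᵥ gromovProductMatrix d i₀ *ᵥ x
      = s * (∑ i, x i * d i i₀) - (∑ i, ∑ j, x i * x j * d i j) / 2 := by
    have h : ∀ i j, x i * ((d i i₀ + d j i₀ - d i j) / 2 * x j)
        = x i * d i i₀ * x j / 2 + x i * (x j * d j i₀) / 2 - x i * x j * d i j / 2 := by
      intro i j; ring
    simp only [gromovProductMatrix, dotProduct, mulVec, of_apply, mul_sum]
    simp only [h, sum_add_distrib, sum_sub_distrib, ← sum_div, ← mul_sum, ← sum_mul]
    ring
  have hcentered : ∑ i, ∑ j, (x - s • δ) i * (x - s • δ) j * d i j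
      = (∑ i, ∑ j, x i * x j * d i j) - 2 * s * (∑ i, x i * d i i₀) := by
    have h : ∀ i j, (x - s • δ) i * (x - s • δ) j * d i j
        = x i * x j * d i j - s * (δ i * (x j * d i j)) - s * (δ j * (x i * d i j))
          + s ^ 2 * (δ i * (δ j * d i j)) := by
      intro i j; simp only [Pi.sub_apply, Pi.smul_apply, smul_eq_mul]; ring
    simp only [h, sum_add_distrib, sum_sub_distrib, ← mul_sum, δ, Pi.single_apply, ite_mul,
      one_mul, zero_mul, sum_ite_irrel, sum_const_zero, sum_ite_eq', mem_univ, if_true, hdiag,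
      mul_zero]
    simp only [hsymm i₀]
    ring
  rw [hquad, hcentered]
  ring

theorem posSemidef_gromovProductMatrix (hsymm : ∀ i j, d i j = d j i) (hdiag : ∀ i, d i i = 0)
    (hd : NegativeType d) (i₀ : ι) : (gromovProductMatrix d i₀).PosSemidef := by
  classical
  refine .of_dotProduct_mulVec_nonneg ?_ fun x => ?_
  · ext i j
    simp only [gromovProductMatrix, conjTranspose_apply, of_apply, star_trivial, hsymm j i]
    ring
  · have hcentered : ∑ i, (x - (∑ k, x k) • Pi.single i₀ 1 : ι → ℝ) i = 0 := by
      simp [sum_sub_distrib, Pi.single_apply]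
    rw [star_trivial, dotProduct_gromovProductMatrix_mulVec hsymm hdiag]
    linarith [hd _ hcentered]

theorem exists_sq_norm_sub_eq_of_negativeType (hsymm : ∀ i j, d i j = d j i)
    (hdiag : ∀ i, d i i = 0) (hd : NegativeType d) :
    ∃ v : ι → EuclideanSpace ℝ ι, ∀ i j, ‖v i - v j‖ ^ 2 = d i j := by
  cases isEmpty_or_nonempty ι
  · exact ⟨isEmptyElim, isEmptyElim⟩
  obtain ⟨i₀⟩ := ‹Nonempty ι›
  obtain ⟨v, hv⟩ := exists_gram_eq_of_posSemidef (posSemidef_gromovProductMatrix hsymm hdiag hd i₀)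
  have hinner : ∀ i j, ⟪v i, v j⟫ = (d i i₀ + d j i₀ - d i j) / 2 := fun i j => by
    rw [← gram_apply, hv, gromovProductMatrix, of_apply]
  refine ⟨v, fun i j => ?_⟩
  rw [norm_sub_sq_real, ← real_inner_self_eq_norm_sq, ← real_inner_self_eq_norm_sq, hinner,
    hinner, hinner, hdiag, hdiag]
  ring

end Schoenberg

theorem stmt9_general {H : Type*} [NormedAddCommGroup H] [InnerProductSpace ℝ H]
    {n : ℕ} (c : Fin n → H) :
    ∃ v : Fin n → EuclideanSpace ℝ (Fin n),
      ∀ i j, ‖v i - v j‖ ^ 2 = ‖c i - c j‖ :=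
  exists_sq_norm_sub_eq_of_negativeType (fun i j => norm_sub_rev _ _) (fun i => by simp)
    (negativeType_norm_sub c)

/-- The metric transform of a finite subset of a real Hilbert space by `F(t) = √t` embeds
isometrically into a Hilbert space: given points `c_1,…,c_n` of a real Hilbert space `H`,
there are vectors `v_1,…,v_n` in `ℝⁿ` with `‖v_i − v_j‖² = ‖c_i − c_j‖` for all `i, j`. -/
theorem stmt9 {H : Type*} [NormedAddCommGroup H] [InnerProductSpace ℝ H] [CompleteSpace H]
    {n : ℕ} (c : Fin n → H) :
    ∃ v : Fin n → EuclideanSpace ℝ (Fin n),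
      ∀ i j, ‖v i - v j‖ ^ 2 = ‖c i - c j‖ :=
  stmt9_general c
end
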